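/- arXiv:2407.18163 — 2 statements merged into one kernel-verified Lean document; each statement's English description precedes it below -/
import Mathlib

section
/- Let X ∼ μ and Y ∼ ν be real-valued random variables that are sub-exponential, i.e., E e^{|X|} ≤ 2 and E e^{|Y|} ≤ 2. Then for every p > 1 there exists a constant C_p > 0, depending only on p, such that for every integer ℓ ≥ 1, |E|X|^ℓ − E|Y|^ℓ| ≤ (C_p ℓ)^ℓ · W_p(μ,ν). -/
noncomputable section

open MeasureTheory ENNReal

/-- `γ` is a coupling of `μ` and `ν`: its first marginal is `μ`, its second marginal is `ν`. -/
def IsCoupling (γ : Measure (ℝ × ℝ)) (μ ν : Measure ℝ) : Prop :=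
  γ.map Prod.fst = μ ∧ γ.map Prod.snd = ν

/-- The transport cost `∫ |x - y|^p dγ(x,y)` of a coupling `γ`. -/
def transportCost (p : ℝ) (γ : Measure (ℝ × ℝ)) : ℝ≥0∞ :=
  ∫⁻ z, (‖z.1 - z.2‖₊ : ℝ≥0∞) ^ p ∂γ

/-- The `p`-Wasserstein distance on the line. -/
def wasserstein (p : ℝ) (μ ν : Measure ℝ) : ℝ≥0∞ :=
  (⨅ γ : {γ : Measure (ℝ × ℝ) // IsCoupling γ μ ν}, transportCost p (γ : Measure (ℝ × ℝ))) ^ (1 / p)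

lemma L1 (n : ℕ) {a b : ℝ} (hb : 0 ≤ b) (hba : b ≤ a) :
    a ^ (n + 1) - b ^ (n + 1) ≤ (n + 1) * a ^ n * (a - b) := by
  induction n with
  | zero => simp
  | succ n ih =>
    have ha : 0 ≤ a := hb.trans hba
    have hbn : b ^ (n + 1) ≤ a ^ (n + 1) := pow_le_pow_left₀ hb hba _
    have han : (0:ℝ) ≤ a ^ (n + 1) := pow_nonneg ha _
    have h1 : a ^ (n + 2) - b ^ (n + 2)
        = a * (a ^ (n + 1) - b ^ (n + 1)) + b ^ (n + 1) * (a - b) := by ring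
    have h2 : a * (a ^ (n + 1) - b ^ (n + 1)) ≤ a * ((n + 1) * a ^ n * (a - b)) :=
      mul_le_mul_of_nonneg_left ih ha
    have h3 : b ^ (n + 1) * (a - b) ≤ a ^ (n + 1) * (a - b) :=
      mul_le_mul_of_nonneg_right hbn (by linarith)
    have h4 : a * ((n + 1) * a ^ n * (a - b)) = (n + 1) * a ^ (n + 1) * (a - b) := by ring
    push_cast
    nlinarith [h1, h2, h3, h4]

lemma L2 (n : ℕ) (x y : ℝ) :
    |(|x|) ^ (n + 1) - (|y|) ^ (n + 1)| ≤ (n + 1) * max |x| |y| ^ n * |x - y| := by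
  have key : ∀ u v : ℝ, |v| ≤ |u| →
      |(|u|) ^ (n + 1) - (|v|) ^ (n + 1)| ≤ (n + 1) * max |u| |v| ^ n * |u - v| := by
    intro u v huv
    have h1 : (|v|) ^ (n + 1) ≤ (|u|) ^ (n + 1) := pow_le_pow_left₀ (abs_nonneg v) huv _
    rw [abs_of_nonneg (by linarith), max_eq_left huv]
    have h2 := L1 n (abs_nonneg v) huv
    have h3 : |u| - |v| ≤ |u - v| := (abs_sub_abs_le_abs_sub u v)
    have h4 : (0:ℝ) ≤ ((n:ℝ) + 1) * |u| ^ n := by positivity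
    nlinarith [h2, h4, mul_le_mul_of_nonneg_left h3 h4]
  rcases le_total |y| |x| with h | h
  · exact key x y h
  · have := key y x h
    rwa [abs_sub_comm ((|y|)^(n+1)), max_comm, abs_sub_comm y x] at this

lemma L3 {t r : ℝ} (ht : 0 ≤ t) (hr : 0 ≤ r) : t ^ r ≤ r ^ r * Real.exp t := by
  rcases eq_or_lt_of_le hr with rfl | hr
  · simpa using Real.one_le_exp ht
  rcases eq_or_lt_of_le ht with rfl | ht
  · rw [Real.zero_rpow hr.ne']
    positivity
  · rw [Real.rpow_def_of_pos ht, Real.rpow_def_of_pos hr, ← Real.exp_add]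
    rw [Real.exp_le_exp]
    have hlog : Real.log (t / r) ≤ t / r - 1 := Real.log_le_sub_one_of_pos (by positivity)
    rw [Real.log_div ht.ne' hr.ne'] at hlog
    have := mul_le_mul_of_nonneg_right hlog hr.le
    have htr : t / r * r = t := div_mul_cancel₀ t hr.ne'
    nlinarith

lemma L4 {μ : Measure ℝ} (hμ : (∫⁻ x, ENNReal.ofReal (Real.exp |x|) ∂μ) ≤ 2) (m : ℕ) :
    Integrable (fun x => |x| ^ m) μ := by
  refine ⟨((measurable_abs.pow_const m).aestronglyMeasurable), ?_⟩
  rw [hasFiniteIntegral_def]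
  calc ∫⁻ x, ‖|x| ^ m‖₊ ∂μ = ∫⁻ x, ENNReal.ofReal (|x| ^ m) ∂μ := by
        refine lintegral_congr fun x => ?_
        rw [← enorm_eq_nnnorm, Real.enorm_eq_ofReal (by positivity)]
    _ ≤ ∫⁻ x, ENNReal.ofReal ((m:ℝ) ^ (m:ℝ)) * ENNReal.ofReal (Real.exp |x|) ∂μ := by
        refine lintegral_mono fun x => ?_
        rw [← ENNReal.ofReal_mul (by positivity)]
        refine ENNReal.ofReal_le_ofReal ?_
        calc |x| ^ m = |x| ^ (m:ℝ) := (Real.rpow_natCast _ _).symm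
          _ ≤ (m:ℝ) ^ (m:ℝ) * Real.exp |x| := L3 (abs_nonneg x) (Nat.cast_nonneg m)
    _ = ENNReal.ofReal ((m:ℝ) ^ (m:ℝ)) * ∫⁻ x, ENNReal.ofReal (Real.exp |x|) ∂μ :=
        lintegral_const_mul _ (by fun_prop)
    _ ≤ ENNReal.ofReal ((m:ℝ) ^ (m:ℝ)) * 2 := mul_le_mul_right hμ _
    _ < ⊤ := by
        exact ENNReal.mul_lt_top ENNReal.ofReal_lt_top (by norm_num)

lemma key {p q : ℝ} (hpq : p.HolderConjugate q) {μ ν : Measure ℝ}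
    (hμ2 : (∫⁻ x, ENNReal.ofReal (Real.exp |x|) ∂μ) ≤ 2)
    (hν2 : (∫⁻ x, ENNReal.ofReal (Real.exp |x|) ∂ν) ≤ 2)
    (n : ℕ) {γ : Measure (ℝ × ℝ)} (hγ : IsCoupling γ μ ν) :
    ENNReal.ofReal |(∫ x, |x| ^ (n + 1) ∂μ) - ∫ x, |x| ^ (n + 1) ∂ν| ≤
      ENNReal.ofReal (4 * ((n : ℝ) + 1) * ((n : ℝ) * q) ^ n) * transportCost p γ ^ (1 / p) := by
  obtain ⟨hγ1, hγ2⟩ := hγ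
  have hq0 : 0 < q := hpq.symm.pos
  have hq1 : 1 < q := hpq.symm.lt
  have hmeas : Measurable fun x : ℝ => |x| ^ (n + 1) := measurable_abs.pow_const _
  -- integrability
  have hμint : Integrable (fun x => |x| ^ (n + 1)) μ := L4 hμ2 _
  have hνint : Integrable (fun x => |x| ^ (n + 1)) ν := L4 hν2 _
  have hmf : Integrable (fun z : ℝ × ℝ => |z.1| ^ (n + 1)) γ := by
    rw [← hγ1] at hμint
    exact (integrable_map_measure hmeas.aestronglyMeasurable measurable_fst.aemeasurable).mp hμint
  have hmg : Integrable (fun z : ℝ × ℝ => |z.2| ^ (n + 1)) γ := by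
    rw [← hγ2] at hνint
    exact (integrable_map_measure hmeas.aestronglyMeasurable measurable_snd.aemeasurable).mp hνint
  have hμeq : ∫ x, |x| ^ (n + 1) ∂μ = ∫ z : ℝ × ℝ, |z.1| ^ (n + 1) ∂γ := by
    rw [← hγ1, integral_map measurable_fst.aemeasurable hmeas.aestronglyMeasurable]
  have hνeq : ∫ x, |x| ^ (n + 1) ∂ν = ∫ z : ℝ × ℝ, |z.2| ^ (n + 1) ∂γ := by
    rw [← hγ2, integral_map measurable_snd.aemeasurable hmeas.aestronglyMeasurable]
  set h : ℝ × ℝ → ℝ := fun z => |z.1| ^ (n + 1) - |z.2| ^ (n + 1) with hh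
  have hInt : Integrable h γ := hmf.sub hmg
  have hsub : (∫ x, |x| ^ (n + 1) ∂μ) - ∫ x, |x| ^ (n + 1) ∂ν = ∫ z, h z ∂γ := by
    rw [hμeq, hνeq, ← integral_sub hmf hmg]
  -- the two Hölder factors
  set F : ℝ × ℝ → ℝ≥0∞ := fun z => ENNReal.ofReal (((n : ℝ) + 1) * max |z.1| |z.2| ^ n) with hF
  set G : ℝ × ℝ → ℝ≥0∞ := fun z => (‖z.1 - z.2‖₊ : ℝ≥0∞) with hG
  have hFmeas : Measurable F :=
    ENNReal.measurable_ofReal.comp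
      (measurable_const.mul ((measurable_fst.abs.max measurable_snd.abs).pow_const n))
  have hGmeas : Measurable G :=
    measurable_coe_nnreal_ennreal.comp (measurable_fst.sub measurable_snd).nnnorm
  -- set A
  set A : ℝ := ((n : ℝ) + 1) ^ q * ((n : ℝ) * q) ^ ((n : ℝ) * q) with hA
  have hA0 : 0 ≤ A := by positivity
  have hFq : ∀ z : ℝ × ℝ, F z ^ q ≤
      ENNReal.ofReal A * (ENNReal.ofReal (Real.exp |z.1|) + ENNReal.ofReal (Real.exp |z.2|)) := by
    intro z
    set M := max |z.1| |z.2| with hM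
    have hM0 : 0 ≤ M := le_trans (abs_nonneg _) (le_max_left _ _)
    rw [hF]
    rw [ENNReal.ofReal_rpow_of_nonneg (by positivity) hq0.le,
      ← ENNReal.ofReal_add (by positivity) (by positivity),
      ← ENNReal.ofReal_mul hA0]
    refine ENNReal.ofReal_le_ofReal ?_
    have h1 : (((n : ℝ) + 1) * M ^ n) ^ q = ((n : ℝ) + 1) ^ q * (M ^ n : ℝ) ^ q :=
      Real.mul_rpow (by positivity) (by positivity)
    have h2 : ((M ^ n : ℝ)) ^ q = M ^ ((n : ℝ) * q) := by
      rw [← Real.rpow_natCast M n, ← Real.rpow_mul hM0]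
    have h3 : M ^ ((n : ℝ) * q) ≤ ((n : ℝ) * q) ^ ((n : ℝ) * q) * Real.exp M :=
      L3 hM0 (by positivity)
    have h4 : Real.exp M ≤ Real.exp |z.1| + Real.exp |z.2| := by
      rcases max_choice |z.1| |z.2| with hc | hc <;> rw [hM, hc]
      · linarith [(Real.exp_pos |z.2|).le]
      · linarith [(Real.exp_pos |z.1|).le]
    calc (((n : ℝ) + 1) * M ^ n) ^ q = ((n : ℝ) + 1) ^ q * M ^ ((n : ℝ) * q) := by rw [h1, h2]
      _ ≤ ((n : ℝ) + 1) ^ q * (((n : ℝ) * q) ^ ((n : ℝ) * q) * Real.exp M) :=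
          mul_le_mul_of_nonneg_left h3 (by positivity)
      _ ≤ ((n : ℝ) + 1) ^ q *
            (((n : ℝ) * q) ^ ((n : ℝ) * q) * (Real.exp |z.1| + Real.exp |z.2|)) := by
          refine mul_le_mul_of_nonneg_left (mul_le_mul_of_nonneg_left h4 (by positivity))
            (by positivity)
      _ = A * (Real.exp |z.1| + Real.exp |z.2|) := by rw [hA]; ring
  have hm1 : Measurable fun z : ℝ × ℝ => ENNReal.ofReal (Real.exp |z.1|) :=
    ENNReal.measurable_ofReal.comp (Real.measurable_exp.comp measurable_fst.abs)
  have hm2 : Measurable fun z : ℝ × ℝ => ENNReal.ofReal (Real.exp |z.2|) :=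
    ENNReal.measurable_ofReal.comp (Real.measurable_exp.comp measurable_snd.abs)
  have e1 : ∫⁻ z : ℝ × ℝ, ENNReal.ofReal (Real.exp |z.1|) ∂γ
      = ∫⁻ x, ENNReal.ofReal (Real.exp |x|) ∂μ := by
    rw [← hγ1, lintegral_map (by fun_prop) measurable_fst]
  have e2 : ∫⁻ z : ℝ × ℝ, ENNReal.ofReal (Real.exp |z.2|) ∂γ
      = ∫⁻ x, ENNReal.ofReal (Real.exp |x|) ∂ν := by
    rw [← hγ2, lintegral_map (by fun_prop) measurable_snd]
  have hIq : (∫⁻ z, F z ^ q ∂γ) ≤ ENNReal.ofReal A * 4 := by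
    calc ∫⁻ z, F z ^ q ∂γ
        ≤ ∫⁻ z, ENNReal.ofReal A *
            (ENNReal.ofReal (Real.exp |z.1|) + ENNReal.ofReal (Real.exp |z.2|)) ∂γ :=
          lintegral_mono hFq
      _ = ENNReal.ofReal A *
            ((∫⁻ z : ℝ × ℝ, ENNReal.ofReal (Real.exp |z.1|) ∂γ) +
              ∫⁻ z : ℝ × ℝ, ENNReal.ofReal (Real.exp |z.2|) ∂γ) := by
          rw [lintegral_const_mul (f := fun z : ℝ × ℝ => ENNReal.ofReal (Real.exp |z.1|) + ENNReal.ofReal (Real.exp |z.2|)) _ (hm1.add hm2), lintegral_add_left hm1]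
      _ ≤ ENNReal.ofReal A * (2 + 2) := by
          rw [e1, e2]; exact mul_le_mul_right (add_le_add hμ2 hν2) _
      _ = ENNReal.ofReal A * 4 := by norm_num
  have hAq : A ^ (1 / q) = ((n : ℝ) + 1) * ((n : ℝ) * q) ^ n := by
    rw [hA, Real.mul_rpow (by positivity) (by positivity),
      ← Real.rpow_natCast ((n : ℝ) * q) n,
      ← Real.rpow_mul (by positivity), ← Real.rpow_mul (by positivity)]
    rw [mul_one_div_cancel hq0.ne', Real.rpow_one]
    congr 1
    field_simp
  have hstep : (∫⁻ z, F z ^ q ∂γ) ^ (1 / q) ≤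
      ENNReal.ofReal (4 * ((n : ℝ) + 1) * ((n : ℝ) * q) ^ n) := by
    calc (∫⁻ z, F z ^ q ∂γ) ^ (1 / q) ≤ (ENNReal.ofReal A * 4) ^ (1 / q) :=
          ENNReal.rpow_le_rpow hIq (by positivity)
      _ = ENNReal.ofReal A ^ (1 / q) * (4 : ℝ≥0∞) ^ (1 / q) :=
          ENNReal.mul_rpow_of_nonneg _ _ (by positivity)
      _ ≤ ENNReal.ofReal A ^ (1 / q) * 4 := by
          refine mul_le_mul_right ?_ _
          calc (4 : ℝ≥0∞) ^ (1 / q) ≤ (4 : ℝ≥0∞) ^ (1 : ℝ) :=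
                ENNReal.rpow_le_rpow_of_exponent_le (by norm_num)
                  (by rw [div_le_one hq0]; linarith)
            _ = 4 := ENNReal.rpow_one 4
      _ = ENNReal.ofReal (((n : ℝ) + 1) * ((n : ℝ) * q) ^ n) * 4 := by
          rw [ENNReal.ofReal_rpow_of_nonneg hA0 (by positivity), hAq]
      _ = ENNReal.ofReal (4 * ((n : ℝ) + 1) * ((n : ℝ) * q) ^ n) := by
          rw [show (4 : ℝ≥0∞) = ENNReal.ofReal 4 by norm_num,
            ← ENNReal.ofReal_mul (by positivity)]
          ring_nf
  -- main chain
  calc ENNReal.ofReal |(∫ x, |x| ^ (n + 1) ∂μ) - ∫ x, |x| ^ (n + 1) ∂ν|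
      = ENNReal.ofReal |∫ z, h z ∂γ| := by rw [hsub]
    _ ≤ ENNReal.ofReal (∫ z, |h z| ∂γ) := by
        refine ENNReal.ofReal_le_ofReal ?_
        simpa [Real.norm_eq_abs] using norm_integral_le_integral_norm (μ := γ) h
    _ = ∫⁻ z, ENNReal.ofReal |h z| ∂γ :=
        ofReal_integral_eq_lintegral_ofReal hInt.abs (Filter.Eventually.of_forall fun z => abs_nonneg _)
    _ ≤ ∫⁻ z, (F * G) z ∂γ := by
        refine lintegral_mono fun z => ?_
        simp only [Pi.mul_apply, hF, hG]
        rw [← enorm_eq_nnnorm, Real.enorm_eq_ofReal_abs, ← ENNReal.ofReal_mul (by positivity)]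
        exact ENNReal.ofReal_le_ofReal (L2 n z.1 z.2)
    _ ≤ (∫⁻ z, F z ^ q ∂γ) ^ (1 / q) * (∫⁻ z, G z ^ p ∂γ) ^ (1 / p) :=
        ENNReal.lintegral_mul_le_Lp_mul_Lq γ hpq.symm hFmeas.aemeasurable hGmeas.aemeasurable
    _ ≤ ENNReal.ofReal (4 * ((n : ℝ) + 1) * ((n : ℝ) * q) ^ n) * transportCost p γ ^ (1 / p) :=
        mul_le_mul_left hstep _

/-- If `X ∼ μ` and `Y ∼ ν` are sub-exponential real random variables (`E e^{|X|} ≤ 2` and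
`E e^{|Y|} ≤ 2`), then for every `p > 1` there is a constant `C_p > 0`, depending only on `p`,
such that for every integer `ℓ ≥ 1`,
`|E|X|^ℓ − E|Y|^ℓ| ≤ (C_p ℓ)^ℓ · W_p(μ,ν)`. -/
theorem subexponential_moment_comparison (p : ℝ) (hp : 1 < p) :
    ∃ C : ℝ, 0 < C ∧
      ∀ (μ ν : Measure ℝ), IsProbabilityMeasure μ → IsProbabilityMeasure ν →
        (∫⁻ x, ENNReal.ofReal (Real.exp |x|) ∂μ) ≤ 2 →
        (∫⁻ x, ENNReal.ofReal (Real.exp |x|) ∂ν) ≤ 2 →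
        ∀ ℓ : ℕ, 1 ≤ ℓ →
          ENNReal.ofReal |(∫ x, |x| ^ ℓ ∂μ) - ∫ x, |x| ^ ℓ ∂ν| ≤
            ENNReal.ofReal ((C * ℓ) ^ ℓ) * wasserstein p μ ν := by
  have hpq : p.HolderConjugate (Real.conjExponent p) := Real.HolderConjugate.conjExponent hp
  set q := Real.conjExponent p with hqdef
  have hq1 : 1 < q := hpq.symm.lt
  have hq0 : 0 < q := by linarith
  refine ⟨4 * q, by positivity, ?_⟩
  intro μ ν hμP hνP hμ2 hν2 ℓ hℓ
  obtain ⟨n, rfl⟩ : ∃ n, ℓ = n + 1 := ⟨ℓ - 1, (Nat.succ_pred_eq_of_pos hℓ).symm⟩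
  have hne : Nonempty {γ : Measure (ℝ × ℝ) // IsCoupling γ μ ν} := by
    refine ⟨⟨μ.prod ν, ?_, ?_⟩⟩
    · rw [Measure.map_fst_prod]; simp
    · rw [Measure.map_snd_prod]; simp
  have hconst : ENNReal.ofReal (4 * ((n : ℝ) + 1) * ((n : ℝ) * q) ^ n) ≤
      ENNReal.ofReal ((4 * q * ((n : ℕ) + 1 : ℕ)) ^ (n + 1)) := by
    refine ENNReal.ofReal_le_ofReal ?_
    push_cast
    have hbase : (n : ℝ) * q ≤ 4 * q * ((n : ℝ) + 1) := by nlinarith [Nat.cast_nonneg (α := ℝ) n]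
    have h1 : ((n : ℝ) * q) ^ n ≤ (4 * q * ((n : ℝ) + 1)) ^ n :=
      pow_le_pow_left₀ (by positivity) hbase n
    have h2 : 4 * ((n : ℝ) + 1) ≤ 4 * q * ((n : ℝ) + 1) := by nlinarith [Nat.cast_nonneg (α := ℝ) n]
    calc 4 * ((n : ℝ) + 1) * ((n : ℝ) * q) ^ n
        ≤ (4 * q * ((n : ℝ) + 1)) * (4 * q * ((n : ℝ) + 1)) ^ n :=
          mul_le_mul h2 h1 (by positivity) (by positivity)
      _ = (4 * q * ((n : ℝ) + 1)) ^ (n + 1) := (pow_succ' _ _).symm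
  have hp0 : (0 : ℝ) < 1 / p := by positivity
  rw [wasserstein]
  have hrw : (⨅ γ : {γ : Measure (ℝ × ℝ) // IsCoupling γ μ ν},
        transportCost p (γ : Measure (ℝ × ℝ))) ^ (1 / p)
      = ⨅ γ : {γ : Measure (ℝ × ℝ) // IsCoupling γ μ ν},
          transportCost p (γ : Measure (ℝ × ℝ)) ^ (1 / p) := by
    have := (ENNReal.orderIsoRpow (1 / p) hp0).map_iInf
      (fun γ : {γ : Measure (ℝ × ℝ) // IsCoupling γ μ ν} =>
        transportCost p (γ : Measure (ℝ × ℝ)))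
    simp only [ENNReal.orderIsoRpow_apply] at this
    exact this
  rw [hrw, ENNReal.mul_iInf' (fun ha => absurd ha ENNReal.ofReal_ne_top) (fun _ => hne)]
  refine le_iInf fun γ => ?_
  calc ENNReal.ofReal |(∫ x, |x| ^ (n + 1) ∂μ) - ∫ x, |x| ^ (n + 1) ∂ν|
      ≤ ENNReal.ofReal (4 * ((n : ℝ) + 1) * ((n : ℝ) * q) ^ n) *
          transportCost p (γ : Measure (ℝ × ℝ)) ^ (1 / p) := key hpq hμ2 hν2 n γ.2
    _ ≤ ENNReal.ofReal ((4 * q * ((n : ℕ) + 1 : ℕ)) ^ (n + 1)) *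
          transportCost p (γ : Measure (ℝ × ℝ)) ^ (1 / p) := mul_le_mul_left hconst _
end
end

section
/- (Rockafellar) A set A ⊆ ℝ^d × ℝ^d is cyclically monotone if and only if there exists a proper lower semicontinuous convex function φ : ℝ^d → ℝ ∪ {+∞} such that A ⊆ ∂φ, i.e., for every (x,y) ∈ A, y is a subgradient of φ at x. -/
noncomputable section

open scoped RealInnerProductSpace

/-- `ℝ^d` with its Euclidean structure. -/
abbrev Euc (d : ℕ) : Type := EuclideanSpace ℝ (Fin d)

/-- A set `A ⊆ ℝ^d × ℝ^d` is cyclically monotone: for every `k ≥ 2` and points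
`(x_1,y_1), …, (x_k,y_k) ∈ A`, `∑_{i=1}^k ⟨x_i − x_{i+1}, y_i⟩ ≥ 0` with `x_{k+1} = x_1`
(indices taken cyclically in `Fin k`). -/
def CyclicallyMonotone {d : ℕ} (A : Set (Euc d × Euc d)) : Prop :=
  ∀ (k : ℕ) (hk : 2 ≤ k) (z : Fin k → Euc d × Euc d), (∀ i, z i ∈ A) →
    0 ≤ ∑ i : Fin k, ⟪(z i).1 - (z (i + ⟨1, by omega⟩)).1, (z i).2⟫

/-- Convexity for an extended-real-valued function `φ : ℝ^d → ℝ ∪ {±∞}`. -/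
def ConvexEReal {d : ℕ} (φ : Euc d → EReal) : Prop :=
  ∀ x y : Euc d, ∀ t : ℝ, 0 ≤ t → t ≤ 1 →
    φ ((1 - t) • x + t • y) ≤ ((1 - t : ℝ) : EReal) * φ x + ((t : ℝ) : EReal) * φ y

/-- `y` is a subgradient of `φ : ℝ^d → ℝ ∪ {+∞}` at `x`:
`φ(z) ≥ φ(x) + ⟨y, z − x⟩` for all `z`. -/
def IsSubgradientAt {d : ℕ} (φ : Euc d → EReal) (y x : Euc d) : Prop :=
  ∀ z : Euc d, φ x + ((⟪y, z - x⟫ : ℝ) : EReal) ≤ φ z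

/-!
If `A ⊆ ∂φ` with `φ` proper, then `φ` is finite at every first coordinate of `A`, and the
subgradient inequalities `φ(x_{i+1}) - φ(x_i) ≥ ⟨y_i, x_{i+1} - x_i⟩` telescope to zero around
any cycle. Conversely, fix `(x₀, y₀) ∈ A` and take Rockafellar's potential
`φ(x) = sup (⟨y₀, x₁ - x₀⟩ + ⋯ + ⟨yₙ, x - xₙ⟩)` over all chains `(x₀, y₀), …, (xₙ, yₙ)` in `A`.
As a supremum of affine functions it is convex and lower semicontinuous; cyclic monotonicity
says exactly that `φ(x₀) ≤ 0`, so `φ` is proper; and appending `(x, y) ∈ A` to a chain shows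
`φ(x) + ⟨y, z - x⟩ ≤ φ(z)`.
-/

open Set

lemma EReal.iSup_add_coe_le {ι : Sort*} {f : ι → EReal} {c : ℝ} {a : EReal}
    (h : ∀ i, f i + c ≤ a) : (⨆ i, f i) + c ≤ a := by
  rw [← EReal.le_sub_iff_add_le (.inl (EReal.coe_ne_bot c)) (.inl (EReal.coe_ne_top c))]
  exact iSup_le fun i =>
    (EReal.le_sub_iff_add_le (.inl (EReal.coe_ne_bot c)) (.inl (EReal.coe_ne_top c))).2 (h i)

lemma Fintype.sum_nonneg_of_sub_le {ι : Type*} [Fintype ι] (σ : Equiv.Perm ι) {r c : ι → ℝ}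
    (h : ∀ i, r i - r (σ i) ≤ c i) : 0 ≤ ∑ i, c i := by
  have hshift : ∑ i, r (σ i) = ∑ i, r i := Equiv.sum_comp σ r
  calc (0 : ℝ) = ∑ i, (r i - r (σ i)) := by rw [Finset.sum_sub_distrib, hshift, sub_self]
    _ ≤ ∑ i, c i := Finset.sum_le_sum fun i _ => h i

lemma convexEReal_iSup_coe {d : ℕ} {ι : Sort*} {g : ι → Euc d → ℝ}
    (hg : ∀ i, ConvexOn ℝ univ (g i)) : ConvexEReal fun x => ⨆ i, (g i x : EReal) := by
  intro x y t ht ht1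
  refine iSup_le fun i => ?_
  have hi : g i ((1 - t) • x + t • y) ≤ (1 - t) * g i x + t * g i y :=
    (hg i).2 (mem_univ x) (mem_univ y) (sub_nonneg.2 ht1) ht (by ring)
  calc (g i ((1 - t) • x + t • y) : EReal)
      ≤ ((1 - t : ℝ) : EReal) * g i x + (t : EReal) * g i y := by exact_mod_cast hi
    _ ≤ ((1 - t : ℝ) : EReal) * (⨆ j, (g j x : EReal)) + (t : EReal) * ⨆ j, (g j y : EReal) := by
      gcongr
      · exact le_iSup (fun j => (g j x : EReal)) i
      · exact le_iSup (fun j => (g j y : EReal)) i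

section Chain

variable {E : Type*} [NormedAddCommGroup E] [InnerProductSpace ℝ E]

/-- `⟨y₀, x₁ - x₀⟩ + ⋯ + ⟨yₙ₋₁, xₙ - xₙ₋₁⟩ + ⟨yₙ, x - xₙ⟩` for the chain `f i = (xᵢ, yᵢ)`. -/
def chainSum (n : ℕ) (f : Fin (n + 1) → E × E) (x : E) : ℝ :=
  (∑ i : Fin n, ⟪(f i.castSucc).2, (f i.succ).1 - (f i.castSucc).1⟫) +
    ⟪(f (Fin.last n)).2, x - (f (Fin.last n)).1⟫

lemma chainSum_snoc (n : ℕ) (f : Fin (n + 1) → E × E) (p : E × E) (x : E) :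
    chainSum (n + 1) (Fin.snoc f p) x = chainSum n f p.1 + ⟪p.2, x - p.1⟫ := by
  simp only [chainSum, Fin.sum_univ_castSucc, Fin.succ_castSucc, Fin.snoc_castSucc,
    Fin.succ_last, Fin.snoc_last]

lemma convexOn_chainSum (n : ℕ) (f : Fin (n + 1) → E × E) :
    ConvexOn ℝ univ (chainSum n f) := by
  refine ⟨convex_univ, fun x _ y _ a b _ _ hab => le_of_eq ?_⟩
  unfold chainSum
  generalize (∑ i : Fin n, ⟪(f i.castSucc).2, (f i.succ).1 - (f i.castSucc).1⟫) = S
  simp only [smul_eq_mul, inner_sub_right, inner_add_right, real_inner_smul_right]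
  linear_combination (⟪(f (Fin.last n)).2, (f (Fin.last n)).1⟫ - S) * hab

lemma continuous_chainSum (n : ℕ) (f : Fin (n + 1) → E × E) : Continuous (chainSum n f) :=
  continuous_const.add (continuous_const.inner (continuous_id.sub continuous_const))

lemma sum_inner_cycle_eq_neg_chainSum (n : ℕ) (f : Fin (n + 2) → E × E) :
    ∑ i : Fin (n + 2), ⟪(f i).1 - (f (i + 1)).1, (f i).2⟫ = -chainSum (n + 1) f (f 0).1 := by
  have hflip : ∀ a b y : E, ⟪a - b, y⟫ = -⟪y, b - a⟫ := fun a b y => by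
    rw [real_inner_comm, inner_sub_right, inner_sub_right]; ring
  simp only [Fin.sum_univ_castSucc, Fin.coeSucc_eq_succ, Fin.last_add_one, hflip,
    Finset.sum_neg_distrib, chainSum]

end Chain

variable {d : ℕ}

lemma CyclicallyMonotone.chainSum_nonpos {A : Set (Euc d × Euc d)} (hA : CyclicallyMonotone A)
    (n : ℕ) (f : Fin (n + 1) → Euc d × Euc d) (hf : ∀ i, f i ∈ A) :
    chainSum n f (f 0).1 ≤ 0 := by
  cases n with
  | zero => simp [chainSum, Fin.last]
  | succ m =>
    have hcycle := hA (m + 2) (by omega) f hf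
    have hone : ∀ h : 1 < m + 2, (⟨1, h⟩ : Fin (m + 2)) = 1 := fun h => by
      ext; simp
    simp only [hone, sum_inner_cycle_eq_neg_chainSum] at hcycle
    linarith

def ChainFrom (A : Set (Euc d × Euc d)) (p₀ : Euc d × Euc d) : Type :=
  Σ n : ℕ, {f : Fin (n + 1) → Euc d × Euc d // (∀ i, f i ∈ A) ∧ f 0 = p₀}

def ChainFrom.single {A : Set (Euc d × Euc d)} {p₀ : Euc d × Euc d} (hp₀ : p₀ ∈ A) :
    ChainFrom A p₀ :=
  ⟨0, fun _ => p₀, fun _ => hp₀, rfl⟩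

def ChainFrom.snoc {A : Set (Euc d × Euc d)} {p₀ : Euc d × Euc d} (c : ChainFrom A p₀)
    {p : Euc d × Euc d} (hp : p ∈ A) : ChainFrom A p₀ :=
  ⟨c.1 + 1, Fin.snoc c.2.1 p, Fin.lastCases (by rwa [Fin.snoc_last])
    (fun i => by rw [Fin.snoc_castSucc]; exact c.2.2.1 i),
    by simpa only [← Fin.castSucc_zero (n := c.1 + 1), Fin.snoc_castSucc] using c.2.2.2⟩

def rockafellarPotential (A : Set (Euc d × Euc d)) (p₀ : Euc d × Euc d) (x : Euc d) : EReal :=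
  ⨆ c : ChainFrom A p₀, (chainSum c.1 c.2.1 x : EReal)

section RockafellarPotential

variable (A : Set (Euc d × Euc d)) (p₀ : Euc d × Euc d)

lemma chainSum_le_rockafellarPotential (c : ChainFrom A p₀) (x : Euc d) :
    (chainSum c.1 c.2.1 x : EReal) ≤ rockafellarPotential A p₀ x :=
  le_iSup (fun c : ChainFrom A p₀ => (chainSum c.1 c.2.1 x : EReal)) c

lemma convexEReal_rockafellarPotential : ConvexEReal (rockafellarPotential A p₀) :=
  convexEReal_iSup_coe fun c => convexOn_chainSum c.1 c.2.1

lemma lowerSemicontinuous_rockafellarPotential :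
    LowerSemicontinuous (rockafellarPotential A p₀) :=
  lowerSemicontinuous_iSup fun c =>
    (continuous_coe_real_ereal.comp (continuous_chainSum c.1 c.2.1)).lowerSemicontinuous

lemma rockafellarPotential_ne_bot (hp₀ : p₀ ∈ A) (x : Euc d) : rockafellarPotential A p₀ x ≠ ⊥ :=
  ne_bot_of_le_ne_bot (EReal.coe_ne_bot _)
    (chainSum_le_rockafellarPotential A p₀ (ChainFrom.single hp₀) x)

lemma rockafellarPotential_base_nonpos (hA : CyclicallyMonotone A) :
    rockafellarPotential A p₀ p₀.1 ≤ 0 :=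
  iSup_le fun c => by
    have h := hA.chainSum_nonpos c.1 c.2.1 c.2.2.1
    rw [c.2.2.2] at h
    exact_mod_cast h

lemma isSubgradientAt_rockafellarPotential {p : Euc d × Euc d} (hp : p ∈ A) :
    IsSubgradientAt (rockafellarPotential A p₀) p.2 p.1 := fun x =>
  EReal.iSup_add_coe_le fun c => by
    have h := chainSum_le_rockafellarPotential A p₀ (c.snoc hp) x
    rwa [ChainFrom.snoc, chainSum_snoc, EReal.coe_add] at h

end RockafellarPotential

lemma CyclicallyMonotone.of_isSubgradientAt {A : Set (Euc d × Euc d)} {φ : Euc d → EReal}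
    (hbot : ∀ x, φ x ≠ ⊥) (hproper : ∃ x, φ x ≠ ⊤)
    (hsub : ∀ p ∈ A, IsSubgradientAt φ p.2 p.1) : CyclicallyMonotone A := by
  intro k hk z hz
  have : NeZero k := ⟨by omega⟩
  obtain ⟨w, hw⟩ := hproper
  have hfinite : ∀ i, φ (z i).1 ≠ ⊤ := fun i htop => by
    have h := hsub (z i) (hz i) w
    rw [htop, EReal.top_add_coe] at h
    exact hw (top_le_iff.1 h)
  have hsub_toReal : ∀ i j, (φ (z i).1).toReal - (φ (z j).1).toReal ≤
      ⟪(z i).1 - (z j).1, (z i).2⟫ := fun i j => by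
    have h := hsub (z i) (hz i) (z j).1
    rw [← EReal.coe_toReal (hfinite i) (hbot _), ← EReal.coe_toReal (hfinite j) (hbot _),
      ← EReal.coe_add, EReal.coe_le_coe_iff, ← neg_sub, inner_neg_right, real_inner_comm] at h
    linarith
  refine Fintype.sum_nonneg_of_sub_le (Equiv.addRight ⟨1, by omega⟩)
    (r := fun i => (φ (z i).1).toReal) fun i => ?_
  exact hsub_toReal i (i + ⟨1, by omega⟩)

/-- **Rockafellar's theorem.** A set `A ⊆ ℝ^d × ℝ^d` is cyclically monotone if and only if there
is a proper lower semicontinuous convex function `φ : ℝ^d → ℝ ∪ {+∞}` with `A ⊆ ∂φ`. -/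
theorem rockafellar (d : ℕ) (A : Set (Euc d × Euc d)) :
    CyclicallyMonotone A ↔
      ∃ φ : Euc d → EReal,
        ConvexEReal φ ∧ LowerSemicontinuous φ ∧
        (∀ x, φ x ≠ ⊥) ∧ (∃ x, φ x ≠ ⊤) ∧
        ∀ p ∈ A, IsSubgradientAt φ p.2 p.1 := by
  refine ⟨fun hA => ?_, fun ⟨_, _, _, hbot, hproper, hsub⟩ => .of_isSubgradientAt hbot hproper hsub⟩
  rcases A.eq_empty_or_nonempty with rfl | ⟨p₀, hp₀⟩
  · exact ⟨fun _ => 0, fun _ _ _ _ _ => by simp, lowerSemicontinuous_const,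
      fun _ => EReal.zero_ne_bot, ⟨0, EReal.zero_ne_top⟩, fun _ hp => hp.elim⟩
  · exact ⟨rockafellarPotential A p₀, convexEReal_rockafellarPotential A p₀,
      lowerSemicontinuous_rockafellarPotential A p₀, rockafellarPotential_ne_bot A p₀ hp₀,
      ⟨p₀.1, ne_top_of_le_ne_top EReal.zero_ne_top (rockafellarPotential_base_nonpos A p₀ hA)⟩,
      fun _ hp => isSubgradientAt_rockafellarPotential A p₀ hp⟩
end
end
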